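/- Let E be a semilattice with zero and let (e_j)_{j∈J} be a nonempty finite family in E×. Then the element ⋁_{j∈J} e_j ∈ ℤ[E×] is the smallest idempotent of ℤ[E×] dominating all the e_j; precisely: (⋁_{j∈J} e_j)² = ⋁_{j∈J} e_j; e_j · (⋁_{j∈J} e_j) = e_j for every j ∈ J; and for every idempotent x ∈ ℤ[E×] with e_j · x = e_j for all j ∈ J one has (⋁_{j∈J} e_j) · x = ⋁_{j∈J} e_j. -/

import Mathlib

set_option linter.unusedSectionVars false

/-- A *semilattice with zero*: a commutative idempotent semigroup with an
absorbing element `0`. -/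
class SemilatticeWithZero (E : Type) extends CommSemigroup E, Zero E where
  mul_idem : ∀ e : E, e * e = e
  zero_mul : ∀ e : E, 0 * e = 0

namespace IndRes

variable {E : Type} [SemilatticeWithZero E]

/-- `single e c`, viewed in the semigroup algebra `ℤ[E]`. -/
noncomputable def sgl (e : E) (c : ℤ) : MonoidAlgebra ℤ E := MonoidAlgebra.ofCoeff (Finsupp.single e c)

/-- Truncation map deleting the coefficient at `0`. -/
noncomputable def T (x : MonoidAlgebra ℤ E) : MonoidAlgebra ℤ E := x - sgl 0 (x.coeff 0)

lemma sgl_apply_self (e : E) (c : ℤ) : (sgl e c).coeff e = c := Finsupp.single_eq_same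

lemma sgl_apply_ne (e d : E) (c : ℤ) (h : e ≠ d) : (sgl e c).coeff d = 0 := Finsupp.single_eq_of_ne (Ne.symm h)

lemma sgl_add (e : E) (c d : ℤ) : sgl e (c + d) = sgl e c + sgl e d := congrArg MonoidAlgebra.ofCoeff (Finsupp.single_add e c d)

lemma sgl_sub (e : E) (c d : ℤ) : sgl e (c - d) = sgl e c - sgl e d := congrArg MonoidAlgebra.ofCoeff (Finsupp.single_sub e c d)

lemma T_apply_zero (x : MonoidAlgebra ℤ E) : (T x).coeff 0 = 0 := by
  show ((x - sgl 0 (x.coeff 0) : MonoidAlgebra ℤ E)).coeff 0 = 0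
  rw [MonoidAlgebra.coeff_sub, Finsupp.sub_apply, sgl_apply_self, sub_self]

/-- `ℤ[E^×]`, realized as the additive subgroup of the semigroup algebra
`ℤ[E]` consisting of the elements whose coefficient at `0` vanishes; it is the free
`ℤ`-module with basis `E^× = E \ {0}`. -/
noncomputable def ZS (E : Type) [SemilatticeWithZero E] : AddSubgroup (MonoidAlgebra ℤ E) where
  carrier := {x | x.coeff 0 = 0}
  zero_mem' := rfl
  add_mem' := by
    intro a b ha hb
    simp only [Set.mem_setOf_eq] at *
    rw [MonoidAlgebra.coeff_add, Finsupp.add_apply, ha, hb, add_zero]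
  neg_mem' := by
    intro a ha
    simp only [Set.mem_setOf_eq] at *
    rw [MonoidAlgebra.coeff_neg, Finsupp.neg_apply, ha, neg_zero]

/-- The integral semigroup ring `ℤ[E^×]`. -/
abbrev ZE (E : Type) [SemilatticeWithZero E] : Type := ↥(ZS E)

lemma mem_ZS {x : MonoidAlgebra ℤ E} : x ∈ ZS E ↔ x.coeff 0 = 0 := Iff.rfl

lemma T_eq_self {x : MonoidAlgebra ℤ E} (h : x.coeff 0 = 0) : T x = x := by
  simp [T, h, sgl]

lemma T_add (a b : MonoidAlgebra ℤ E) : T (a + b) = T a + T b := by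
  unfold T
  rw [show ((a + b).coeff 0) = a.coeff 0 + b.coeff 0 from Finsupp.add_apply a.coeff b.coeff 0, sgl_add]
  abel

lemma T_sub_sgl (x : MonoidAlgebra ℤ E) (m : ℤ) : T (x - sgl 0 m) = T x := by
  unfold T
  have h : ((x - sgl 0 m : MonoidAlgebra ℤ E)).coeff 0 = x.coeff 0 - m := by
    rw [MonoidAlgebra.coeff_sub, Finsupp.sub_apply, sgl_apply_self]
  rw [h, sgl_sub]
  abel

lemma single_zero_mul (c : ℤ) (b : MonoidAlgebra ℤ E) :
    (sgl 0 c) * b = sgl 0 (((sgl 0 c * b : MonoidAlgebra ℤ E)).coeff 0) := by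
  classical
  ext d
  by_cases hd : d = 0
  · subst hd; rw [sgl_apply_self]
  · rw [sgl_apply_ne 0 d _ (Ne.symm hd)]
    by_contra h
    have hmem : d ∈ ((sgl (0:E) c) * b).coeff.support := Finsupp.mem_support_iff.mpr h
    have h2 := MonoidAlgebra.support_coeff_mul_subset (sgl (0:E) c) b hmem
    rw [Finset.mem_mul] at h2
    obtain ⟨a, ha, b', _, hab⟩ := h2
    have ha' : a = 0 := by
      have := Finsupp.support_single_subset (ha : a ∈ (Finsupp.single (0:E) c).support)
      simpa using this
    exact hd (by rw [← hab, ha', SemilatticeWithZero.zero_mul])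

lemma T_mul_left (a b : MonoidAlgebra ℤ E) : T (T a * b) = T (a * b) := by
  have h1 : T a * b = a * b - (sgl 0 (a.coeff 0)) * b := by rw [T, sub_mul]
  rw [h1, single_zero_mul, T_sub_sgl]

lemma T_mul_right (a b : MonoidAlgebra ℤ E) : T (a * T b) = T (a * b) := by
  rw [mul_comm a (T b), T_mul_left, mul_comm]

noncomputable instance : Mul (ZE E) :=
  ⟨fun x y => ⟨T (x.1 * y.1), T_apply_zero _⟩⟩

lemma ZE.val_mul (x y : ZE E) : (x * y).1 = T (x.1 * y.1) := rfl

noncomputable instance : NonUnitalCommRing (ZE E) :=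
  { (inferInstance : AddCommGroup (ZE E)) with
    mul := (· * ·)
    left_distrib := by
      intro x y z
      apply Subtype.ext
      show T (x.1 * (y.1 + z.1)) = T (x.1 * y.1) + T (x.1 * z.1)
      rw [mul_add, T_add]
    right_distrib := by
      intro x y z
      apply Subtype.ext
      show T ((x.1 + y.1) * z.1) = T (x.1 * z.1) + T (y.1 * z.1)
      rw [add_mul, T_add]
    zero_mul := by
      intro x
      apply Subtype.ext
      show T ((0 : MonoidAlgebra ℤ E) * x.1) = 0
      rw [zero_mul]
      simp [T, sgl]
    mul_zero := by
      intro x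
      apply Subtype.ext
      show T (x.1 * (0 : MonoidAlgebra ℤ E)) = 0
      rw [mul_zero]
      simp [T, sgl]
    mul_assoc := by
      intro x y z
      apply Subtype.ext
      show T (T (x.1 * y.1) * z.1) = T (x.1 * T (y.1 * z.1))
      rw [T_mul_left, T_mul_right, mul_assoc]
    mul_comm := by
      intro x y
      apply Subtype.ext
      show T (x.1 * y.1) = T (y.1 * x.1)
      rw [mul_comm] }

/-- The canonical image of `e ∈ E` in `ℤ[E^×]`: the basis element `e` if `e ≠ 0`,
and `0` if `e = 0`. -/
noncomputable def elt (e : E) : ZE E := ⟨T (sgl e 1), T_apply_zero _⟩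

/-- Product of a (nonempty) finite family in a commutative non-unital ring, computed inside
the unitization.  For a nonempty index set this is the iterated product. -/
noncomputable def nprod {ι A : Type} [NonUnitalCommRing A] (s : Finset ι) (f : ι → A) : A :=
  (∏ j ∈ s, (Unitization.inr (f j) : Unitization ℤ A)).snd

/-- The join `⋁_{j ∈ J} x_j = ∑_{∅ ≠ J' ⊆ J} (-1)^{|J'|+1} ∏_{j ∈ J'} x_j`
of a finite family of idempotents of a commutative non-unital ring. -/
noncomputable def rjoin {ι A : Type} [NonUnitalCommRing A] (s : Finset ι) (f : ι → A) : A :=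
  ∑ t ∈ s.powerset.filter (fun t => t.Nonempty), ((-1 : ℤ) ^ (t.card + 1)) • nprod t f

/-- The join `⋁_{j ∈ J} e_j ∈ ℤ[E^×]` of a finite family of elements of `E`:
`∑_{∅ ≠ J' ⊆ J} (-1)^{|J'|+1} ∏_{j ∈ J'} e_j`, where a product whose value in `E`
is `0` contributes `0`. -/
noncomputable def join {ι : Type} (s : Finset ι) (e : ι → E) : ZE E :=
  rjoin s (fun j => elt (e j))

/-- Iterated product of a nonempty list in a semigroup with zero (the value on the
empty list is the junk value `0`). -/
def listProd : List E → E
  | [] => 0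
  | [a] => a
  | a :: b :: l => a * listProd (b :: l)

/-- The product `∏_{j ∈ s} f j ∈ E` of a (nonempty) finite family. -/
noncomputable def eprod {ι : Type} (s : Finset ι) (f : ι → E) : E :=
  listProd (s.toList.map f)

/-- The support `E(x)` of `x ∈ ℤ[E^×]`: the finite set of elements of `E^×` appearing
with a nonzero coefficient in the reduced form of `x`. -/
noncomputable def supp (x : ZE E) : Finset E := x.1.coeff.support

section Action

variable {Γ : Type} [Group Γ] [MulAction Γ E]

/-- The induced action of `g ∈ Γ` on `ℤ[E^×]`: the `ℤ`-linear map sending a basis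
element `e ∈ E^×` to `g • e`.  (When the action fixes `0` — which is the case for an
action by semigroup automorphisms fixing `0` — the truncation `T` is a no-op, and this
is the automorphism of `ℤ[E^×]` induced by `τ_g`.) -/
noncomputable def act (g : Γ) (x : ZE E) : ZE E :=
  ⟨T (MonoidAlgebra.ofCoeff (Finsupp.mapDomain (fun e : E => g • e) x.1.coeff)), T_apply_zero _⟩

end Action



attribute [local instance] Classical.propDecidable

variable {E : Type} [SemilatticeWithZero E]

/-- A Γ-semilattice structure: the group acts by semigroup automorphisms fixing `0`. -/
def IsGammaSL (Γ E : Type) [Group Γ] [SemilatticeWithZero E] [MulAction Γ E] : Prop :=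
  (∀ (g : Γ) (x y : E), g • (x * y) = (g • x) * (g • y)) ∧ (∀ g : Γ, g • (0 : E) = 0)

/-- The set `E_φ`. -/
def Ephi {D : Type} [NonUnitalCommRing D] (φ : ZE E →ₙ+* D) : Set (ZE E) :=
  { x | ∃ (e : E) (J : Finset E), e ≠ 0 ∧ (∀ f ∈ J, f ≠ 0 ∧ f * e = f ∧ f ≠ e) ∧
      x = elt e - join J (fun f => f) ∧
      φ (elt e) = rjoin J (fun f => φ (elt f)) }

/-- `R` is a finite cover for `e ∈ E^×`. -/
def IsCover (e : E) (R : Finset E) : Prop :=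
  (∀ f ∈ R, f ≠ 0 ∧ f * e = f) ∧
  ∀ f' : E, f' ≠ 0 → f' * e = f' → ∃ f ∈ R, f' * f ≠ 0

/-- `ℛ` is a collection of finite covers for `E`. -/
def CovSystem (ℛ : E → Set (Finset E)) : Prop :=
  ∀ e : E, e ≠ 0 → ∀ R ∈ ℛ e, IsCover e R

/-- Condition (i). -/
def CondI (ℛ : E → Set (Finset E)) : Prop :=
  ∀ d e : E, d ≠ 0 → e ≠ 0 → d * e ≠ 0 → ∀ R ∈ ℛ e,
    d * e ∈ (R.image (fun f => d * f)).erase 0 ∨ (R.image (fun f => d * f)).erase 0 ∈ ℛ (d * e)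

/-- Condition (ii). -/
def CondII (ℛ : E → Set (Finset E)) : Prop :=
  ∀ e : E, e ≠ 0 → ∀ r : ℕ, 0 < r → ∀ Rs : Fin r → Finset E,
    Function.Injective Rs → (∀ i, Rs i ∈ ℛ e) → ∀ ε : Fin r → E,
    (∀ i, ε i ∈ supp (join (Rs i) (fun f => f))) → ∀ j : Fin r,
      (if r = 1 then e else eprod (Finset.univ.erase j) ε) ≠ 0 →
      eprod Finset.univ ε * (if r = 1 then e else eprod (Finset.univ.erase j) ε)
          = eprod Finset.univ ε ∧
      eprod Finset.univ ε ≠ (if r = 1 then e else eprod (Finset.univ.erase j) ε)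

/-- Condition (iii). -/
def CondIII (Γ : Type) [Group Γ] [MulAction Γ E] (ℛ : E → Set (Finset E)) : Prop :=
  ∀ (g : Γ) (e : E), e ≠ 0 →
    (fun R : Finset E => R.image (fun f => g • f)) '' (ℛ e) = ℛ (g • e)

/-- `e(𝒮) = ∏_{R ∈ 𝒮} (e - ⋁R) ∈ ℤ[E^×]`. -/
noncomputable def eS (e : E) (S : Finset (Finset E)) : ZE E :=
  nprod S (fun R => elt e - join R (fun f => f))

/-- `E(E,ℛ) = {e(𝒮) : e ∈ E^×, 𝒮 ⊆ ℛ(e) nonempty finite} ∪ {0} ⊆ ℤ[E^×]`. -/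
def EER (ℛ : E → Set (Finset E)) : Set (ZE E) :=
  {x | ∃ (e : E) (S : Finset (Finset E)), e ≠ 0 ∧ S.Nonempty ∧ ↑S ⊆ ℛ e ∧ x = eS e S} ∪ {0}

/-- `R(𝒮,R̃) = {e(𝒮 ∪ {R̃})} ∪ {f ⬝ e(𝒮) : f ∈ R̃, f ⬝ e(𝒮) ≠ 0}`. -/
noncomputable def RSR (e : E) (S : Finset (Finset E)) (Rt : Finset E) : Finset (ZE E) :=
  insert (eS e (insert Rt S)) ((Rt.image (fun f => elt f * eS e S)).erase 0)

/-- The collection of finite covers `ℛ(E,ℛ)` on `E(E,ℛ)`, assigning to an element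
`x = e(𝒮)` of `E(E,ℛ)^×` the covers `R(𝒮,R̃)`, `R̃ ∈ ℛ(e) ∖ 𝒮` (over all ways of
presenting `x` in the form `e(𝒮)`). -/
def RER (ℛ : E → Set (Finset E)) (x : ZE E) : Set (Finset (ZE E)) :=
  {C | ∃ (e : E) (S : Finset (Finset E)) (Rt : Finset E),
        e ≠ 0 ∧ S.Nonempty ∧ ↑S ⊆ ℛ e ∧ Rt ∈ ℛ e ∧ Rt ∉ S ∧ x = eS e S ∧ C = RSR e S Rt}

/-- The `ℤ`-linear map `ℤ[E₁^×] → ℤ[E₂^×]` induced by a map `θ` from `E₁` to `ℤ[E₂^×]`,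
sending a basis element `e' ∈ E₁^×` to `θ e'`. -/
noncomputable def indMap {E₁ E₂ : Type} [SemilatticeWithZero E₁] [SemilatticeWithZero E₂]
    (θ : E₁ → ZE E₂) : ZE E₁ →ₗ[ℤ] ZE E₂ :=
  (Finsupp.linearCombination ℤ θ).comp
    ((MonoidAlgebra.coeffLinearEquiv ℤ).toLinearMap.comp ((ZS E₁).subtype.toIntLinearMap))

/-- `(E₁, ℛ₁, θ)` is a realization of the construction `(E(E,ℛ), ℛ(E,ℛ))`:
`θ` identifies the abstract Γ-semilattice `E₁` with `E(E,ℛ) ⊆ ℤ[E^×]` (equivariantly,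
multiplicatively and preserving `0`), and `ℛ₁` corresponds to `ℛ(E,ℛ)` under this
identification. -/
def Realizes {Γ E E₁ : Type} [Group Γ] [SemilatticeWithZero E] [MulAction Γ E]
    [SemilatticeWithZero E₁] [MulAction Γ E₁]
    (ℛ : E → Set (Finset E)) (ℛ₁ : E₁ → Set (Finset E₁)) (θ : E₁ → ZE E) : Prop :=
  Function.Injective θ ∧ Set.range θ = EER ℛ ∧ θ 0 = 0 ∧
  (∀ x y : E₁, θ (x * y) = θ x * θ y) ∧
  (∀ (g : Γ) (x : E₁), θ (g • x) = act g (θ x)) ∧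
  (∀ e' : E₁, e' ≠ 0 → ∀ C : Finset E₁, C ∈ ℛ₁ e' ↔ C.image θ ∈ RER ℛ (θ e'))

end IndRes

open IndRes

/-! In the unitization `ℤ ⊕ A` of a commutative non-unital ring `A`, inclusion–exclusion turns
`⋁ⱼ fⱼ` into `1 - ∏ⱼ (1 - fⱼ)`. If `fⱼ x = fⱼ` for all `j`, then each factor `1 - fⱼ` fixes
`1 - x`, so `(⋁ⱼ fⱼ) x = ⋁ⱼ fⱼ`; if `fⱼ` is idempotent, it kills the factor `1 - fⱼ`, so
`fⱼ (⋁ⱼ fⱼ) = fⱼ`. The first fact applied to `x = ⋁ⱼ fⱼ` then gives idempotency. In `ℤ[E×]`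
every basis element is idempotent because `E` is. -/

section IdempotentJoin

variable {R ι : Type*} [CommRing R] {s : Finset ι} {a : ι → R}

theorem Finset.prod_one_sub_mul_one_sub_of_forall_mul_eq {x : R} (h : ∀ j ∈ s, a j * x = a j) :
    (∏ j ∈ s, (1 - a j)) * (1 - x) = 1 - x := by
  induction s using Finset.cons_induction with
  | empty => simp
  | cons i s _ ih =>
    rw [Finset.prod_cons, mul_assoc, ih fun j hj => h j (Finset.mem_cons_of_mem hj)]
    linear_combination h i (Finset.mem_cons_self i s)

theorem Finset.mul_prod_one_sub_eq_zero {j : ι} (hj : j ∈ s) (ha : IsIdempotentElem (a j)) :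
    a j * ∏ i ∈ s, (1 - a i) = 0 := by
  classical
  rw [← Finset.mul_prod_erase s _ hj, ← mul_assoc, mul_sub, mul_one, ha.eq, sub_self, zero_mul]

end IdempotentJoin

namespace IndRes

section Elt

variable {E : Type} [SemilatticeWithZero E]

theorem elt_mul_elt (a b : E) : elt a * elt b = elt (a * b) := by
  apply Subtype.ext
  show T (T (sgl a 1) * T (sgl b 1)) = T (sgl (a * b) 1)
  rw [T_mul_left, T_mul_right]
  congr 1
  show MonoidAlgebra.single a (1 : ℤ) * MonoidAlgebra.single b 1 = MonoidAlgebra.single (a * b) 1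
  rw [MonoidAlgebra.single_mul_single, one_mul]

theorem isIdempotentElem_elt (a : E) : IsIdempotentElem (elt a) := by
  rw [IsIdempotentElem, elt_mul_elt, SemilatticeWithZero.mul_idem]

end Elt

variable {ι A : Type} [NonUnitalCommRing A] (s : Finset ι) (f : ι → A)

theorem inr_nprod {t : Finset ι} (ht : t.Nonempty) :
    ((nprod t f : A) : Unitization ℤ A) = ∏ j ∈ t, (f j : Unitization ℤ A) := by
  have hfst : (∏ j ∈ t, (f j : Unitization ℤ A)).fst = 0 := by
    classical
    obtain ⟨j, hj⟩ := ht
    rw [← Finset.mul_prod_erase _ _ hj, Unitization.fst_mul, Unitization.fst_inr, zero_mul]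
  ext
  · rw [Unitization.fst_inr, hfst]
  · rfl

theorem inr_rjoin :
    ((rjoin s f : A) : Unitization ℤ A) = 1 - ∏ j ∈ s, (1 - (f j : Unitization ℤ A)) := by
  classical
  have hfilter : s.powerset.filter (fun t => t.Nonempty) = s.powerset.erase ∅ := by
    ext t; simp [Finset.nonempty_iff_ne_empty, and_comm]
  rw [Finset.prod_sub (fun _ => (1 : Unitization ℤ A)) (fun j => (f j : Unitization ℤ A)) s,
    ← Finset.add_sum_erase _ _ (Finset.empty_mem_powerset s), rjoin, hfilter,
    ← Unitization.inrHom_apply ℤ, map_sum]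
  simp only [Unitization.inrHom_apply, Finset.card_empty, pow_zero, Finset.sdiff_empty,
    Finset.prod_const_one, mul_one, Finset.prod_empty]
  rw [sub_add_cancel_left, ← Finset.sum_neg_distrib]
  refine Finset.sum_congr rfl fun t ht => ?_
  rw [Unitization.inr_smul,
    inr_nprod f (Finset.nonempty_iff_ne_empty.2 (Finset.ne_of_mem_erase ht)), zsmul_eq_mul,
    ← eq_intCast (Int.castRingHom _), map_pow, map_neg, map_one]
  ring

variable {s f}

theorem rjoin_mul_of_forall_mul_eq {x : A} (h : ∀ j ∈ s, f j * x = f j) :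
    rjoin s f * x = rjoin s f := by
  apply Unitization.inr_injective (R := ℤ)
  have h' : ∀ j ∈ s, (f j : Unitization ℤ A) * x = f j := fun j hj => by
    rw [← Unitization.inr_mul, h j hj]
  rw [Unitization.inr_mul, inr_rjoin]
  linear_combination Finset.prod_one_sub_mul_one_sub_of_forall_mul_eq (R := Unitization ℤ A) h'

theorem mul_rjoin_of_mem {j : ι} (hj : j ∈ s) (hf : IsIdempotentElem (f j)) :
    f j * rjoin s f = f j := by
  apply Unitization.inr_injective (R := ℤ)
  have hf' : IsIdempotentElem (f j : Unitization ℤ A) := by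
    rw [IsIdempotentElem, ← Unitization.inr_mul, hf.eq]
  rw [Unitization.inr_mul, inr_rjoin]
  linear_combination
    -Finset.mul_prod_one_sub_eq_zero (a := fun i => (f i : Unitization ℤ A)) hj hf'

theorem isIdempotentElem_rjoin (hf : ∀ j ∈ s, IsIdempotentElem (f j)) :
    IsIdempotentElem (rjoin s f) :=
  rjoin_mul_of_forall_mul_eq fun j hj => mul_rjoin_of_mem hj (hf j hj)

end IndRes

theorem statement_0_general {E ι : Type} [SemilatticeWithZero E]
    (J : Finset ι) (e : ι → E) :
    join J e * join J e = join J e ∧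
    (∀ j ∈ J, elt (e j) * join J e = elt (e j)) ∧
    ∀ x : ZE E, x * x = x → (∀ j ∈ J, elt (e j) * x = elt (e j)) →
      join J e * x = join J e := by
  have hidem : ∀ j ∈ J, IsIdempotentElem (elt (e j)) := fun j _ => isIdempotentElem_elt (e j)
  exact ⟨isIdempotentElem_rjoin hidem,
    fun j hj => mul_rjoin_of_mem (f := fun j => elt (e j)) hj (hidem j hj),
    fun _ _ hx => rjoin_mul_of_forall_mul_eq hx⟩

theorem statement_0 {E ι : Type} [SemilatticeWithZero E]
    (J : Finset ι) (hJ : J.Nonempty) (e : ι → E) (he : ∀ j ∈ J, e j ≠ 0) :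
    join J e * join J e = join J e ∧
    (∀ j ∈ J, elt (e j) * join J e = elt (e j)) ∧
    ∀ x : ZE E, x * x = x → (∀ j ∈ J, elt (e j) * x = elt (e j)) →
      join J e * x = join J e :=
  statement_0_general J e
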